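/- arXiv:2507.03388 — 2 statements merged into one kernel-verified Lean document; each statement's English description precedes it below -/
import Mathlib

section
/- Let O ⊂ ℝ³ be a bounded smooth domain, M, H ∈ V₁ (i.e. H¹ vector fields with tangential trace condition v × n = 0 on ∂O), and v ∈ V (divergence-free H¹₀ vector fields), with div(M + H) = 0 in O. Then ∫_O (M·∇)H · v dx = −∫_O [(M + H)·∇]v · H dx − ∫_O (curl H) · (H × v) dx. -/
open MeasureTheory

noncomputable section

abbrev V3 : Type := Fin 3 → ℝ

/-- The partial derivative `∂ᵢ fⱼ`. -/
def pd (f : V3 → V3) (i j : Fin 3) (x : V3) : ℝ := fderiv ℝ f x (Pi.single i 1) j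

/-- The partial derivative `∂ᵢ g` of a scalar field. -/
def pds (g : V3 → ℝ) (i : Fin 3) (x : V3) : ℝ := fderiv ℝ g x (Pi.single i 1)

def div3 (f : V3 → V3) (x : V3) : ℝ := ∑ i, pd f i i x

def curl3 (f : V3 → V3) (x : V3) : V3 :=
  ![pd f 1 2 x - pd f 2 1 x, pd f 2 0 x - pd f 0 2 x, pd f 0 1 x - pd f 1 0 x]

def dot3 (a b : V3) : ℝ := ∑ i, a i * b i

def cross3 (a b : V3) : V3 :=
  ![a 1 * b 2 - a 2 * b 1, a 2 * b 0 - a 0 * b 2, a 0 * b 1 - a 1 * b 0]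

/-- `(b·∇)f`. -/
def dirD (b : V3) (f : V3 → V3) (x : V3) : V3 := fun j => ∑ i, b i * pd f i j x

def grads (g : V3 → ℝ) (x : V3) : V3 := fun i => pds g i x

def gradDot (u v : V3 → V3) (x : V3) : ℝ := ∑ i, ∑ j, pd u i j x * pd v i j x

def sq2 (O : Set V3) (f : V3 → V3) : ℝ := ∫ x in O, dot3 (f x) (f x)

def l2 (O : Set V3) (f : V3 → V3) : ℝ := (sq2 O f) ^ ((1:ℝ)/2)

def l4 (O : Set V3) (f : V3 → V3) : ℝ := (∫ x in O, (dot3 (f x) (f x))^2) ^ ((1:ℝ)/4)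

def gradSq (O : Set V3) (u : V3 → V3) : ℝ := ∫ x in O, gradDot u u x

def gradL2 (O : Set V3) (u : V3 → V3) : ℝ := (gradSq O u) ^ ((1:ℝ)/2)

def divSq (O : Set V3) (f : V3 → V3) : ℝ := ∫ x in O, (div3 f x)^2

def v1Sq (O : Set V3) (f : V3 → V3) : ℝ := sq2 O f + sq2 O (curl3 f) + divSq O f

def v1n (O : Set V3) (f : V3 → V3) : ℝ := (v1Sq O f) ^ ((1:ℝ)/2)

/-- Membership in `V`: a divergence-free `H¹₀(O)³` field (smooth representative,
compactly supported in `O`). -/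
def memV (O : Set V3) (v : V3 → V3) : Prop :=
  ContDiff ℝ 1 v ∧ HasCompactSupport v ∧ tsupport v ⊆ O ∧ ∀ x ∈ O, div3 v x = 0

/-- Membership in `V₁`: an `H¹(O)³` field with tangential trace `f × n = 0` on `∂O`,
where `ν` is the outward unit normal field. -/
def memV1 (O : Set V3) (ν : V3 → V3) (f : V3 → V3) : Prop :=
  ContDiff ℝ 1 f ∧ ∀ x ∈ frontier O, cross3 (f x) (ν x) = 0

def pd2 (f : V3 → V3) (i j k : Fin 3) (x : V3) : ℝ :=
  fderiv ℝ (fun y => pd f i k y) x (Pi.single j 1)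

def h2n (O : Set V3) (v : V3 → V3) : ℝ :=
  (sq2 O v + (∫ x in O, ∑ i, ∑ k, (pd v i k x)^2)
    + (∫ x in O, ∑ i, ∑ j, ∑ k, (pd2 v i j k x)^2)) ^ ((1:ℝ)/2)

-- auxiliary lemmas

lemma cont_pds {g : V3 → ℝ} (hg : ContDiff ℝ 1 g) (i : Fin 3) :
    Continuous fun x => pds g i x :=
  (hg.continuous_fderiv one_ne_zero).clm_apply continuous_const

lemma cont_pd {f : V3 → V3} (hf : ContDiff ℝ 1 f) (i j : Fin 3) :
    Continuous fun x => pd f i j x :=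
  (continuous_apply j).comp ((hf.continuous_fderiv one_ne_zero).clm_apply continuous_const)

lemma pd_zero_of_nmem {f : V3 → V3} {x : V3} (h : x ∉ tsupport f) (i j : Fin 3) :
    pd f i j x = 0 := by
  simp [pd, fderiv_of_notMem_tsupport (𝕜 := ℝ) h]

lemma pds_zero_of_nmem {g : V3 → ℝ} {x : V3} (h : x ∉ tsupport g) (i : Fin 3) :
    pds g i x = 0 := by
  simp [pds, fderiv_of_notMem_tsupport (𝕜 := ℝ) h]

/-- The auxiliary field whose divergence realizes the integrand combination. -/
def phiF (M H v : V3 → V3) (j i : Fin 3) (y : V3) : ℝ :=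
  (M y i + H y i) * (H y j * v y j) - (1/2) * (v y i * (H y j * H y j))

lemma pds_phi (M H v : V3 → V3) (x : V3)
    (hM : DifferentiableAt ℝ M x) (hH : DifferentiableAt ℝ H x) (hv : DifferentiableAt ℝ v x)
    (j i : Fin 3) :
    pds (phiF M H v j i) i x
      = (pd M i i x + pd H i i x) * (H x j * v x j)
        + (M x i + H x i) * (H x j * pd v i j x + v x j * pd H i j x)
        - (1/2) * (v x i * (H x j * pd H i j x + H x j * pd H i j x)
            + (H x j * H x j) * pd v i i x) := by
  have hMc : ∀ k : Fin 3, HasFDerivAt (fun y => M y k)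
      ((ContinuousLinearMap.proj k).comp (fderiv ℝ M x)) x :=
    fun k => by exact (ContinuousLinearMap.proj k).hasFDerivAt.comp x hM.hasFDerivAt
  have hHc : ∀ k : Fin 3, HasFDerivAt (fun y => H y k)
      ((ContinuousLinearMap.proj k).comp (fderiv ℝ H x)) x :=
    fun k => by exact (ContinuousLinearMap.proj k).hasFDerivAt.comp x hH.hasFDerivAt
  have hvc : ∀ k : Fin 3, HasFDerivAt (fun y => v y k)
      ((ContinuousLinearMap.proj k).comp (fderiv ℝ v x)) x :=
    fun k => by exact (ContinuousLinearMap.proj k).hasFDerivAt.comp x hv.hasFDerivAt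
  have hd := (((hMc i).add (hHc i)).mul ((hHc j).mul (hvc j))).sub
      (((hvc i).mul ((hHc j).mul (hHc j))).const_mul (1/2))
  have hfd : fderiv ℝ (phiF M H v j i) x = _ := HasFDerivAt.fderiv (x := x) hd
  rw [pds, hfd]
  simp only [ContinuousLinearMap.coe_sub', Pi.sub_apply, ContinuousLinearMap.add_apply,
    ContinuousLinearMap.coe_smul', Pi.smul_apply, ContinuousLinearMap.coe_comp',
    Function.comp_apply, ContinuousLinearMap.proj_apply, smul_eq_mul, pd, Pi.mul_apply,
      Pi.add_apply]
  ring

lemma phiF_contDiff {M H v : V3 → V3} (hM : ContDiff ℝ 1 M) (hH : ContDiff ℝ 1 H)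
    (hv : ContDiff ℝ 1 v) (j i : Fin 3) : ContDiff ℝ 1 (phiF M H v j i) := by
  have hc : ∀ (f : V3 → V3), ContDiff ℝ 1 f → ∀ k : Fin 3, ContDiff ℝ 1 fun y => f y k :=
    fun f hf k => by exact (ContinuousLinearMap.proj k).contDiff.comp hf
  exact (((hc M hM i).add (hc H hH i)).mul ((hc H hH j).mul (hc v hv j))).sub
    (contDiff_const.mul ((hc v hv i).mul ((hc H hH j).mul (hc H hH j))))

lemma phiF_zero {M H v : V3 → V3} {x : V3} (hx : x ∉ tsupport v) (j i : Fin 3) :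
    phiF M H v j i x = 0 := by
  have h : v x = 0 := image_eq_zero_of_notMem_tsupport hx
  simp [phiF, h]

lemma phiF_tsupport {M H v : V3 → V3} (j i : Fin 3) :
    tsupport (phiF M H v j i) ⊆ tsupport v := by
  apply closure_minimal _ (isClosed_tsupport v)
  intro x hx
  by_contra h
  exact hx (phiF_zero h j i)

lemma integral_sum_pds_eq_zero (f : Fin 3 → V3 → ℝ)
    (hf : ∀ i, ContDiff ℝ 1 (f i)) (hsupp : ∀ i, HasCompactSupport (f i)) :
    ∫ x : V3, ∑ i, pds (f i) i x = 0 := by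
  obtain ⟨R, hR0, hR⟩ : ∃ R : ℝ, 0 < R ∧ ∀ i, ∀ x ∈ tsupport (f i), ‖x‖ < R := by
    obtain ⟨R, hR⟩ := (isCompact_iUnion (fun i => hsupp i)).isBounded.subset_closedBall 0
    refine ⟨|R| + 1, by positivity, fun i x hx => ?_⟩
    have := hR (Set.mem_iUnion.2 ⟨i, hx⟩)
    simp only [Metric.mem_closedBall, dist_zero_right] at this
    calc ‖x‖ ≤ R := this
    _ < |R| + 1 := by cases abs_cases R <;> linarith
  set a : V3 := fun _ => -R with ha
  set b : V3 := fun _ => R with hb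
  have hle : a ≤ b := fun i => by simp [ha, hb]; linarith
  have hout : ∀ x : V3, x ∉ Set.pi Set.univ (fun i => Set.Ioo (a i) (b i)) →
      ∀ i, x ∉ tsupport (f i) := by
    intro x hx i hmem
    apply hx
    intro j _
    have hj : |x j| ≤ ‖x‖ := by
      simpa using norm_le_pi_norm x j
    have := hR i x hmem
    have : |x j| < R := lt_of_le_of_lt hj this
    rw [abs_lt] at this
    exact ⟨by simpa [ha] using this.1, by simpa [hb] using this.2⟩
  have hIccout : ∀ x : V3, x ∉ Set.Icc a b → ∀ i, x ∉ tsupport (f i) := by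
    intro x hx
    refine hout x (fun hmem => hx ?_)
    exact ⟨fun j => (hmem j (Set.mem_univ j)).1.le, fun j => (hmem j (Set.mem_univ j)).2.le⟩
  have key := integral_divergence_of_hasFDerivAt_off_countable' (n := 2) a b hle
      (fun i x => f i x) (fun i x => fderiv ℝ (f i) x) ∅ Set.countable_empty
      (fun i => (hf i).continuous.continuousOn)
      (fun x _ i => ((hf i).differentiable one_ne_zero x).hasFDerivAt)
      ((continuous_finset_sum _ fun i _ => cont_pds (hf i) i).continuousOn.integrableOn_compact
        isCompact_Icc)
  have hzero : ∀ (i : Fin (2+1)) (c : ℝ), c = R ∨ c = -R →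
      ∀ y : Fin 2 → ℝ, f i (i.insertNth c y) = 0 := by
    intro i c hc y
    have hns : (i.insertNth c y : V3) ∉ tsupport (f i) := by
      intro hmem
      have h1 : |(i.insertNth c y : V3) i| ≤ ‖(i.insertNth c y : V3)‖ := by
        simpa using norm_le_pi_norm (i.insertNth c y : V3) i
      rw [show (i.insertNth c y : V3) i = c from
        Fin.insertNth_apply_same (α := fun _ => ℝ) i c y] at h1
      have := hR i _ hmem
      rcases hc with rfl | rfl <;>
        simp [abs_of_pos hR0, abs_of_neg (neg_neg_iff_pos.2 hR0)] at h1 <;> linarith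
    exact image_eq_zero_of_notMem_tsupport hns
  rw [show (∫ x : V3, ∑ i, pds (f i) i x) = ∫ x in Set.Icc a b, ∑ i, pds (f i) i x from
    (setIntegral_eq_integral_of_forall_compl_eq_zero (fun x hx => by
      exact Finset.sum_eq_zero fun i _ => pds_zero_of_nmem (hIccout x hx i) i)).symm]
  rw [show (∫ x in Set.Icc a b, ∑ i, pds (f i) i x)
      = ∫ x in Set.Icc a b, ∑ i, fderiv ℝ (f i) x (Pi.single i 1) from rfl]
  rw [key]
  refine Finset.sum_eq_zero fun i _ => ?_
  have h1 : ∀ y, f i (i.insertNth (b i) y) = 0 := fun y => hzero i (b i) (Or.inl rfl) y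
  have h2 : ∀ y, f i (i.insertNth (a i) y) = 0 := fun y => hzero i (a i) (Or.inr rfl) y
  simp [h1, h2]

theorem statement1' (O : Set V3) (hO : IsOpen O)
    (M H v : V3 → V3)
    (hM : ContDiff ℝ 1 M) (hH : ContDiff ℝ 1 H) (hv : memV O v)
    (hdivMH : ∀ x ∈ O, div3 (fun y => M y + H y) x = 0) :
    (∫ x in O, dot3 (dirD (M x) H x) (v x))
      = -(∫ x in O, dot3 (dirD (M x + H x) v x) (H x))
        - (∫ x in O, dot3 (curl3 H x) (cross3 (H x) (v x))) := by
  obtain ⟨hvcd, hvcs, hvsub, hvdiv⟩ := hv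
  have hφc : ∀ j i : Fin 3, ContDiff ℝ 1 (phiF M H v j i) := phiF_contDiff hM hH hvcd
  have hφcs : ∀ j i : Fin 3, HasCompactSupport (phiF M H v j i) := fun j i =>
    IsCompact.of_isClosed_subset hvcs (isClosed_tsupport _) (phiF_tsupport j i)
  -- integrability helper
  have hint : ∀ g : V3 → ℝ, Continuous g → (∀ x, x ∉ tsupport v → g x = 0) →
      IntegrableOn g O volume := by
    intro g hg hg0
    have hts : tsupport g ⊆ tsupport v := by
      apply closure_minimal _ (isClosed_tsupport v)
      intro x hx
      by_contra h
      exact hx (hg0 x h)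
    exact (hg.integrable_of_hasCompactSupport
      (IsCompact.of_isClosed_subset hvcs (isClosed_tsupport g) hts)).integrableOn
  have contMi : ∀ i : Fin 3, Continuous fun x => M x i :=
    fun i => (continuous_apply i).comp hM.continuous
  have contHi : ∀ i : Fin 3, Continuous fun x => H x i :=
    fun i => (continuous_apply i).comp hH.continuous
  have contvi : ∀ i : Fin 3, Continuous fun x => v x i :=
    fun i => (continuous_apply i).comp hvcd.continuous
  have hIA : IntegrableOn (fun x => dot3 (dirD (M x) H x) (v x)) O volume := by
    refine hint _ ?_ ?_
    · simp only [dot3, dirD]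
      exact continuous_finset_sum _ fun j _ =>
        (continuous_finset_sum _ fun i _ => (contMi i).mul (cont_pd hH i j)).mul (contvi j)
    · intro x hx
      have h : v x = 0 := image_eq_zero_of_notMem_tsupport hx
      simp [dot3, h]
  have hIB : IntegrableOn (fun x => dot3 (dirD (M x + H x) v x) (H x)) O volume := by
    refine hint _ ?_ ?_
    · simp only [dot3, dirD, Pi.add_apply]
      exact continuous_finset_sum _ fun j _ =>
        (continuous_finset_sum _ fun i _ =>
          ((contMi i).add (contHi i)).mul (cont_pd hvcd i j)).mul (contHi j)
    · intro x hx
      simp [dot3, dirD, pd_zero_of_nmem hx]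
  have hIC : IntegrableOn (fun x => dot3 (curl3 H x) (cross3 (H x) (v x))) O volume := by
    refine hint _ ?_ ?_
    · simp only [dot3, curl3, cross3, Fin.sum_univ_three, Matrix.cons_val_zero,
        Matrix.cons_val_one, Matrix.head_cons, Matrix.cons_val_two, Matrix.tail_cons]
      refine Continuous.add (Continuous.add ?_ ?_) ?_ <;>
        exact Continuous.mul (Continuous.sub (cont_pd hH _ _) (cont_pd hH _ _))
          (Continuous.sub ((contHi _).mul (contvi _)) ((contHi _).mul (contvi _)))
    · intro x hx
      have h : v x = 0 := image_eq_zero_of_notMem_tsupport hx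
      simp [dot3, cross3, h, Fin.sum_univ_three]
  -- key pointwise identity
  have key : ∀ x ∈ O,
      dot3 (dirD (M x) H x) (v x) + dot3 (dirD (M x + H x) v x) (H x)
        + dot3 (curl3 H x) (cross3 (H x) (v x))
      = ∑ j : Fin 3, ∑ i : Fin 3, pds (phiF M H v j i) i x := by
    intro x hx
    have hdM : DifferentiableAt ℝ M x := hM.differentiable one_ne_zero x
    have hdH : DifferentiableAt ℝ H x := hH.differentiable one_ne_zero x
    have hdv : DifferentiableAt ℝ v x := hvcd.differentiable one_ne_zero x
    have h1 : (pd M 0 0 x + pd H 0 0 x) + ((pd M 1 1 x + pd H 1 1 x)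
        + (pd M 2 2 x + pd H 2 2 x)) = 0 := by
      have h := hdivMH x hx
      simp only [div3, Fin.sum_univ_three, pd, fderiv_fun_add hdM hdH,
        ContinuousLinearMap.add_apply, Pi.add_apply] at h
      simp only [pd]
      linarith
    have h2 : pd v 0 0 x + pd v 1 1 x + pd v 2 2 x = 0 := by
      have h := hvdiv x hx
      simp only [div3, Fin.sum_univ_three] at h
      linarith
    simp only [pds_phi M H v x hdM hdH hdv]
    simp only [dot3, dirD, curl3, cross3, Fin.sum_univ_three, Matrix.cons_val_zero,
      Matrix.cons_val_one, Matrix.head_cons, Matrix.cons_val_two, Matrix.tail_cons,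
      Pi.add_apply]
    linear_combination (-(H x 0 * v x 0 + H x 1 * v x 1 + H x 2 * v x 2)) * h1
      + ((1/2) * (H x 0 * H x 0 + H x 1 * H x 1 + H x 2 * H x 2)) * h2
  have h0 : (∫ x in O, dot3 (dirD (M x) H x) (v x))
      + (∫ x in O, dot3 (dirD (M x + H x) v x) (H x))
      + (∫ x in O, dot3 (curl3 H x) (cross3 (H x) (v x))) = 0 := by
    have hIAB : IntegrableOn (fun x => dot3 (dirD (M x) H x) (v x)
        + dot3 (dirD (M x + H x) v x) (H x)) O volume := hIA.add hIB
    rw [← integral_add hIA hIB, ← integral_add hIAB hIC]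
    rw [setIntegral_congr_fun hO.measurableSet key]
    have hintj : ∀ j : Fin 3, IntegrableOn (fun x => ∑ i, pds (phiF M H v j i) i x) O volume :=
      fun j => hint _ (continuous_finset_sum _ fun i _ => cont_pds (hφc j i) i)
        (fun x hx => Finset.sum_eq_zero fun i _ =>
          pds_zero_of_nmem (fun h => hx (phiF_tsupport j i h)) i)
    rw [integral_finset_sum _ (fun j _ => hintj j)]
    refine Finset.sum_eq_zero fun j _ => ?_
    rw [setIntegral_eq_integral_of_forall_compl_eq_zero (fun x hx =>
      Finset.sum_eq_zero fun i _ =>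
        pds_zero_of_nmem (fun h => hx (hvsub (phiF_tsupport j i h))) i)]
    exact integral_sum_pds_eq_zero (fun i => phiF M H v j i) (fun i => hφc j i)
      (fun i => hφcs j i)
  linarith

/-- For `M, H ∈ V₁`, `v ∈ V`, with `div (M + H) = 0` in `O`:
`∫ (M·∇)H · v = −∫ [(M+H)·∇]v · H − ∫ curl H · (H × v)`. -/
theorem statement1 (O : Set V3) (hO : IsOpen O) (hObd : Bornology.IsBounded O)
    (ν : V3 → V3) (hν : ∀ x ∈ frontier O, dot3 (ν x) (ν x) = 1)
    (M H v : V3 → V3)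
    (hM : memV1 O ν M) (hH : memV1 O ν H) (hv : memV O v)
    (hdivMH : ∀ x ∈ O, div3 (fun y => M y + H y) x = 0) :
    (∫ x in O, dot3 (dirD (M x) H x) (v x))
      = -(∫ x in O, dot3 (dirD (M x + H x) v x) (H x))
        - (∫ x in O, dot3 (curl3 H x) (cross3 (H x) (v x))) :=
  statement1' O hO M H v hM.1 hH.1 hv hdivMH
end
end

section
/- Let X₁ ⊂ X₂ and Y₁ ⊂ Y₂ be continuous embeddings of Banach spaces, Z a Banach space, and Σ : X₁ × Y₁ → Z' a bilinear map for which there exist C > 0 and r ∈ (0,1] with |⟨Σ(x,y),z⟩| ≤ C ‖x‖_{X₂}^r ‖x‖_{X₁}^{1−r} ‖y‖_{Y₂}^r ‖y‖_{Y₁}^{1−r} ‖z‖_Z. If (x_ℓ, y_ℓ) is bounded in L²(0,T; X₁ × Y₁), converges strongly to (x,y) in L²(0,T; X₂ × Y₂), and converges weakly to (x,y) in L²(0,T; X₁ × Y₁), then for every z ∈ Z, ∫₀^T ⟨Σ(x_ℓ,y_ℓ),z⟩ ds → ∫₀^T ⟨Σ(x,y),z⟩ ds. -/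
open MeasureTheory Filter
open scoped ENNReal NNReal

noncomputable section

namespace Statement13Aux

variable {α : Type*} [MeasurableSpace α]

lemma integrable_sq_norm {E : Type*} [NormedAddCommGroup E] {μ : Measure α} {f : α → E}
    (hf : MemLp f 2 μ) : Integrable (fun t => ‖f t‖ ^ 2) μ :=
  (memLp_two_iff_integrable_sq_norm hf.aestronglyMeasurable).mp hf

section Bil

variable {X₁ X₂ Y₁ Y₂ Z : Type*}
    [NormedAddCommGroup X₁] [NormedSpace ℝ X₁] [NormedAddCommGroup X₂] [NormedSpace ℝ X₂]
    [NormedAddCommGroup Y₁] [NormedSpace ℝ Y₁] [NormedAddCommGroup Y₂] [NormedSpace ℝ Y₂]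
    [NormedAddCommGroup Z] [NormedSpace ℝ Z]
    (e₁ : X₁ →L[ℝ] X₂) (e₂ : Y₁ →L[ℝ] Y₂)
    (B : X₁ →ₗ[ℝ] Y₁ →ₗ[ℝ] (Z →L[ℝ] ℝ))
    {C r : ℝ}

/-- Global bound on `B` coming from the interpolation bound. -/
lemma global_bound (hC : 0 < C) (hr0 : 0 < r)
    (hbound : ∀ (x : X₁) (y : Y₁) (z : Z),
      |B x y z| ≤ C * ‖e₁ x‖ ^ r * ‖x‖ ^ (1 - r) * ‖e₂ y‖ ^ r * ‖y‖ ^ (1 - r) * ‖z‖)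
    (a : X₁) (b : Y₁) (w : Z) :
    ‖B a b w‖ ≤ (C * ‖e₁‖ ^ r * ‖e₂‖ ^ r) * ‖a‖ * ‖b‖ * ‖w‖ := by
  have h1 : ‖e₁ a‖ ^ r ≤ ‖e₁‖ ^ r * ‖a‖ ^ r := by
    rw [← Real.mul_rpow (norm_nonneg _) (norm_nonneg _)]
    exact Real.rpow_le_rpow (norm_nonneg _) (e₁.le_opNorm a) hr0.le
  have h2 : ‖e₂ b‖ ^ r ≤ ‖e₂‖ ^ r * ‖b‖ ^ r := by
    rw [← Real.mul_rpow (norm_nonneg _) (norm_nonneg _)]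
    exact Real.rpow_le_rpow (norm_nonneg _) (e₂.le_opNorm b) hr0.le
  calc ‖B a b w‖ = |B a b w| := Real.norm_eq_abs _
    _ ≤ C * ‖e₁ a‖ ^ r * ‖a‖ ^ (1 - r) * ‖e₂ b‖ ^ r * ‖b‖ ^ (1 - r) * ‖w‖ := hbound a b w
    _ ≤ C * (‖e₁‖ ^ r * ‖a‖ ^ r) * ‖a‖ ^ (1 - r) * (‖e₂‖ ^ r * ‖b‖ ^ r) * ‖b‖ ^ (1 - r) * ‖w‖ := by
        gcongr <;> positivity
    _ = (C * ‖e₁‖ ^ r * ‖e₂‖ ^ r) * (‖a‖ ^ r * ‖a‖ ^ (1 - r)) * (‖b‖ ^ r * ‖b‖ ^ (1 - r)) * ‖w‖ := by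
        ring
    _ = (C * ‖e₁‖ ^ r * ‖e₂‖ ^ r) * ‖a‖ ^ (r + (1 - r)) * ‖b‖ ^ (r + (1 - r)) * ‖w‖ := by
        rw [Real.rpow_add' (norm_nonneg a) (by norm_num), Real.rpow_add' (norm_nonneg b) (by norm_num)]
    _ = (C * ‖e₁‖ ^ r * ‖e₂‖ ^ r) * ‖a‖ * ‖b‖ * ‖w‖ := by norm_num

lemma integrable_term (hC : 0 < C) (hr0 : 0 < r)
    (hbound : ∀ (x : X₁) (y : Y₁) (z : Z),
      |B x y z| ≤ C * ‖e₁ x‖ ^ r * ‖x‖ ^ (1 - r) * ‖e₂ y‖ ^ r * ‖y‖ ^ (1 - r) * ‖z‖)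
    {μ : Measure α} {u : α → X₁} {v : α → Y₁}
    (hu : MemLp u 2 μ) (hv : MemLp v 2 μ) (z : Z) :
    Integrable (fun t => B (u t) (v t) z) μ := by
  set M : ℝ := C * ‖e₁‖ ^ r * ‖e₂‖ ^ r with hM
  have hM0 : 0 ≤ M := by positivity
  have hb : ∀ (a : X₁) (b : Y₁), ‖B a b‖ ≤ M * ‖a‖ * ‖b‖ := by
    intro a b
    apply ContinuousLinearMap.opNorm_le_bound _ (by positivity)
    intro w
    exact global_bound e₁ e₂ B hC hr0 hbound a b w
  set B' := LinearMap.mkContinuous₂ B M hb with hB'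
  have hcont : Continuous fun q : X₁ × Y₁ => B' q.1 q.2 z := by
    have h1 : Continuous fun q : X₁ × Y₁ => B' q.1 q.2 := B'.continuous₂
    exact (ContinuousLinearMap.apply ℝ ℝ z).continuous.comp h1
  have hmeas : AEStronglyMeasurable (fun t => B (u t) (v t) z) μ := by
    have := hcont.comp_aestronglyMeasurable
      (hu.aestronglyMeasurable.prodMk hv.aestronglyMeasurable)
    simpa [Function.comp, hB', LinearMap.mkContinuous₂_apply] using this
  have hprod : Integrable (fun t => ‖u t‖ * ‖v t‖) μ := by
    have h2 : MemLp ((fun t => ‖u t‖) • fun t => ‖v t‖) 1 μ :=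
      hv.norm.smul hu.norm (hpqr := ⟨by rw [ENNReal.inv_two_add_inv_two, inv_one]⟩)
    have := memLp_one_iff_integrable.mp h2
    exact this
  have hint : Integrable (fun t => (M * ‖z‖) * (‖u t‖ * ‖v t‖)) μ := hprod.const_mul _
  refine hint.mono' hmeas (Eventually.of_forall fun t => ?_)
  calc ‖B (u t) (v t) z‖ ≤ ‖B (u t) (v t)‖ * ‖z‖ := (B (u t) (v t)).le_opNorm z
    _ ≤ (M * ‖u t‖ * ‖v t‖) * ‖z‖ :=
        mul_le_mul_of_nonneg_right (hb _ _) (norm_nonneg z)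
    _ = (M * ‖z‖) * (‖u t‖ * ‖v t‖) := by ring

/-- Key interpolation estimate for a single term. -/
lemma term_bound (hC : 0 < C) (hr0 : 0 < r) (hr1 : r ≤ 1)
    (hbound : ∀ (x : X₁) (y : Y₁) (z : Z),
      |B x y z| ≤ C * ‖e₁ x‖ ^ r * ‖x‖ ^ (1 - r) * ‖e₂ y‖ ^ r * ‖y‖ ^ (1 - r) * ‖z‖)
    {μ : Measure α} (u : α → X₁) (v : α → Y₁)
    (hu : MemLp u 2 μ) (hv : MemLp v 2 μ) (z : Z) :
    |∫ t, B (u t) (v t) z ∂μ| ≤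
      C * ‖z‖ * (∫ t, ‖e₁ (u t)‖ ^ 2 ∂μ) ^ (r / 2)
        * (∫ t, ‖u t‖ ^ 2 ∂μ) ^ ((1 - r) / 2)
        * (∫ t, ‖e₂ (v t)‖ ^ 2 ∂μ) ^ (r / 2)
        * (∫ t, ‖v t‖ ^ 2 ∂μ) ^ ((1 - r) / 2) := by
  have r0 : (0:ℝ) ≤ r / 2 := by linarith
  have s0 : (0:ℝ) ≤ (1 - r) / 2 := by linarith
  have hCz : (0:ℝ) ≤ C * ‖z‖ := by positivity
  have hu1 : MemLp (fun t => e₁ (u t)) 2 μ := by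
    simpa [Function.comp_def] using e₁.comp_memLp' hu
  have hv1 : MemLp (fun t => e₂ (v t)) 2 μ := by
    simpa [Function.comp_def] using e₂.comp_memLp' hv
  have hA1n : 0 ≤ ∫ t, ‖e₁ (u t)‖ ^ 2 ∂μ := integral_nonneg fun t => by positivity
  have hA2n : 0 ≤ ∫ t, ‖u t‖ ^ 2 ∂μ := integral_nonneg fun t => by positivity
  have hA3n : 0 ≤ ∫ t, ‖e₂ (v t)‖ ^ 2 ∂μ := integral_nonneg fun t => by positivity
  have hA4n : 0 ≤ ∫ t, ‖v t‖ ^ 2 ∂μ := integral_nonneg fun t => by positivity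
  have l1 : ∫⁻ t, ENNReal.ofReal (‖e₁ (u t)‖ ^ 2) ∂μ = ENNReal.ofReal (∫ t, ‖e₁ (u t)‖ ^ 2 ∂μ) :=
    (ofReal_integral_eq_lintegral_ofReal (integrable_sq_norm hu1)
      (Eventually.of_forall fun t => by positivity)).symm
  have l2 : ∫⁻ t, ENNReal.ofReal (‖u t‖ ^ 2) ∂μ = ENNReal.ofReal (∫ t, ‖u t‖ ^ 2 ∂μ) :=
    (ofReal_integral_eq_lintegral_ofReal (integrable_sq_norm hu)
      (Eventually.of_forall fun t => by positivity)).symm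
  have l3 : ∫⁻ t, ENNReal.ofReal (‖e₂ (v t)‖ ^ 2) ∂μ = ENNReal.ofReal (∫ t, ‖e₂ (v t)‖ ^ 2 ∂μ) :=
    (ofReal_integral_eq_lintegral_ofReal (integrable_sq_norm hv1)
      (Eventually.of_forall fun t => by positivity)).symm
  have l4 : ∫⁻ t, ENNReal.ofReal (‖v t‖ ^ 2) ∂μ = ENNReal.ofReal (∫ t, ‖v t‖ ^ 2 ∂μ) :=
    (ofReal_integral_eq_lintegral_ofReal (integrable_sq_norm hv)
      (Eventually.of_forall fun t => by positivity)).symm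
  set f : Fin 4 → α → ℝ≥0∞ := ![fun t => ENNReal.ofReal (‖e₁ (u t)‖ ^ 2),
    fun t => ENNReal.ofReal (‖u t‖ ^ 2), fun t => ENNReal.ofReal (‖e₂ (v t)‖ ^ 2),
    fun t => ENNReal.ofReal (‖v t‖ ^ 2)] with hfdef
  set p : Fin 4 → ℝ := ![r / 2, (1 - r) / 2, r / 2, (1 - r) / 2] with hpdef
  have hfm : ∀ i ∈ Finset.univ, AEMeasurable (f i) μ := by
    intro i _
    fin_cases i <;> simp only [hfdef] <;> simp
    · exact hu1.aestronglyMeasurable.enorm.pow_const 2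
    · exact hu.aestronglyMeasurable.enorm.pow_const 2
    · exact hv1.aestronglyMeasurable.enorm.pow_const 2
    · exact hv.aestronglyMeasurable.enorm.pow_const 2
  have hps : ∑ i, p i = 1 := by
    simp [hpdef, Fin.sum_univ_four]
    ring
  have hpn : ∀ i ∈ Finset.univ, 0 ≤ p i := by
    intro i _
    fin_cases i <;> simp [hpdef] <;> linarith
  have holder := ENNReal.lintegral_prod_norm_pow_le (μ := μ) Finset.univ hfm hps hpn
  have sqr : ∀ (a : ℝ) (s : ℝ), 0 ≤ a → 0 ≤ s →
      ENNReal.ofReal (a ^ 2) ^ (s / 2) = ENNReal.ofReal (a ^ s) := by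
    intro a s ha hs
    rw [ENNReal.ofReal_rpow_of_nonneg (by positivity) (by linarith)]
    congr 1
    rw [← Real.rpow_natCast a 2, ← Real.rpow_mul ha]
    congr 1
    push_cast
    ring
  have hpt : ∀ t, ENNReal.ofReal ‖B (u t) (v t) z‖ ≤
      ENNReal.ofReal (C * ‖z‖) * ∏ i, f i t ^ p i := by
    intro t
    have step1 : ENNReal.ofReal ‖B (u t) (v t) z‖ ≤
        ENNReal.ofReal (C * ‖z‖ * ‖e₁ (u t)‖ ^ r * ‖u t‖ ^ (1 - r) * ‖e₂ (v t)‖ ^ r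
          * ‖v t‖ ^ (1 - r)) := by
      apply ENNReal.ofReal_le_ofReal
      rw [Real.norm_eq_abs]
      calc |B (u t) (v t) z|
          ≤ C * ‖e₁ (u t)‖ ^ r * ‖u t‖ ^ (1 - r) * ‖e₂ (v t)‖ ^ r * ‖v t‖ ^ (1 - r) * ‖z‖ :=
            hbound (u t) (v t) z
        _ = C * ‖z‖ * ‖e₁ (u t)‖ ^ r * ‖u t‖ ^ (1 - r) * ‖e₂ (v t)‖ ^ r * ‖v t‖ ^ (1 - r) := by
            ring
    refine step1.trans (le_of_eq ?_)
    rw [ENNReal.ofReal_mul (by positivity), ENNReal.ofReal_mul (by positivity),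
      ENNReal.ofReal_mul (by positivity), ENNReal.ofReal_mul (by positivity)]
    rw [Fin.prod_univ_four]
    simp only [hfdef, hpdef]
    simp only [Matrix.cons_val_zero, Matrix.cons_val_one, Matrix.head_cons,
      Matrix.cons_val_two, Matrix.tail_cons, Matrix.cons_val_three]
    rw [sqr _ r (norm_nonneg _) hr0.le, sqr _ (1 - r) (norm_nonneg _) (by linarith),
      sqr _ r (norm_nonneg _) hr0.le, sqr _ (1 - r) (norm_nonneg _) (by linarith)]
    ring
  have main : ∫⁻ t, ENNReal.ofReal ‖B (u t) (v t) z‖ ∂μ ≤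
      ENNReal.ofReal (C * ‖z‖) * (ENNReal.ofReal (∫ t, ‖e₁ (u t)‖ ^ 2 ∂μ) ^ (r / 2)
        * ENNReal.ofReal (∫ t, ‖u t‖ ^ 2 ∂μ) ^ ((1 - r) / 2)
        * ENNReal.ofReal (∫ t, ‖e₂ (v t)‖ ^ 2 ∂μ) ^ (r / 2)
        * ENNReal.ofReal (∫ t, ‖v t‖ ^ 2 ∂μ) ^ ((1 - r) / 2)) := by
    calc ∫⁻ t, ENNReal.ofReal ‖B (u t) (v t) z‖ ∂μ
        ≤ ∫⁻ t, ENNReal.ofReal (C * ‖z‖) * ∏ i, f i t ^ p i ∂μ := lintegral_mono hpt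
      _ = ENNReal.ofReal (C * ‖z‖) * ∫⁻ t, ∏ i, f i t ^ p i ∂μ :=
          lintegral_const_mul' _ _ ENNReal.ofReal_ne_top
      _ ≤ ENNReal.ofReal (C * ‖z‖) * ∏ i, (∫⁻ t, f i t ∂μ) ^ p i := by
          gcongr
      _ = _ := by
          rw [Fin.prod_univ_four]
          simp only [hfdef, hpdef]
          simp only [Matrix.cons_val_zero, Matrix.cons_val_one, Matrix.head_cons,
            Matrix.cons_val_two, Matrix.tail_cons, Matrix.cons_val_three]
          rw [l1, l2, l3, l4]
  have hne : ENNReal.ofReal (C * ‖z‖) * (ENNReal.ofReal (∫ t, ‖e₁ (u t)‖ ^ 2 ∂μ) ^ (r / 2)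
        * ENNReal.ofReal (∫ t, ‖u t‖ ^ 2 ∂μ) ^ ((1 - r) / 2)
        * ENNReal.ofReal (∫ t, ‖e₂ (v t)‖ ^ 2 ∂μ) ^ (r / 2)
        * ENNReal.ofReal (∫ t, ‖v t‖ ^ 2 ∂μ) ^ ((1 - r) / 2)) ≠ ⊤ := by
    apply ENNReal.mul_ne_top ENNReal.ofReal_ne_top
    apply ENNReal.mul_ne_top
    apply ENNReal.mul_ne_top
    apply ENNReal.mul_ne_top
    all_goals exact ENNReal.rpow_ne_top_of_nonneg (by linarith) ENNReal.ofReal_ne_top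
  calc |∫ t, B (u t) (v t) z ∂μ| = ‖∫ t, B (u t) (v t) z ∂μ‖ := (Real.norm_eq_abs _).symm
    _ ≤ (∫⁻ t, ENNReal.ofReal ‖B (u t) (v t) z‖ ∂μ).toReal := norm_integral_le_lintegral_norm _
    _ ≤ (ENNReal.ofReal (C * ‖z‖) * (ENNReal.ofReal (∫ t, ‖e₁ (u t)‖ ^ 2 ∂μ) ^ (r / 2)
        * ENNReal.ofReal (∫ t, ‖u t‖ ^ 2 ∂μ) ^ ((1 - r) / 2)
        * ENNReal.ofReal (∫ t, ‖e₂ (v t)‖ ^ 2 ∂μ) ^ (r / 2)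
        * ENNReal.ofReal (∫ t, ‖v t‖ ^ 2 ∂μ) ^ ((1 - r) / 2))).toReal :=
        ENNReal.toReal_mono hne main
    _ = C * ‖z‖ * (∫ t, ‖e₁ (u t)‖ ^ 2 ∂μ) ^ (r / 2)
        * (∫ t, ‖u t‖ ^ 2 ∂μ) ^ ((1 - r) / 2)
        * (∫ t, ‖e₂ (v t)‖ ^ 2 ∂μ) ^ (r / 2)
        * (∫ t, ‖v t‖ ^ 2 ∂μ) ^ ((1 - r) / 2) := by
        rw [ENNReal.toReal_mul, ENNReal.toReal_mul, ENNReal.toReal_mul, ENNReal.toReal_mul,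
          ← ENNReal.toReal_rpow, ← ENNReal.toReal_rpow, ← ENNReal.toReal_rpow,
          ← ENNReal.toReal_rpow, ENNReal.toReal_ofReal hCz, ENNReal.toReal_ofReal hA1n,
          ENNReal.toReal_ofReal hA2n, ENNReal.toReal_ofReal hA3n, ENNReal.toReal_ofReal hA4n]
        ring

end Bil

end Statement13Aux

end

noncomputable section

open MeasureTheory Filter Statement13Aux

set_option maxHeartbeats 1000000

/-- Convergence of a bilinear term along a sequence that is bounded
in `L²(0,T; X₁ × Y₁)`, strongly convergent in `L²(0,T; X₂ × Y₂)` and weakly convergent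
in `L²(0,T; X₁ × Y₁)`, where the bilinear map `Σ : X₁ × Y₁ → Z'` satisfies the
interpolation-type bound with exponent `r ∈ (0,1]`. -/
theorem statement13
    {X₁ X₂ Y₁ Y₂ Z : Type*}
    [NormedAddCommGroup X₁] [NormedSpace ℝ X₁] [NormedAddCommGroup X₂] [NormedSpace ℝ X₂]
    [NormedAddCommGroup Y₁] [NormedSpace ℝ Y₁] [NormedAddCommGroup Y₂] [NormedSpace ℝ Y₂]
    [NormedAddCommGroup Z] [NormedSpace ℝ Z]
    (e₁ : X₁ →L[ℝ] X₂) (he₁ : Function.Injective e₁)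
    (e₂ : Y₁ →L[ℝ] Y₂) (he₂ : Function.Injective e₂)
    (B : X₁ →ₗ[ℝ] Y₁ →ₗ[ℝ] (Z →L[ℝ] ℝ))
    (C r : ℝ) (hC : 0 < C) (hr0 : 0 < r) (hr1 : r ≤ 1)
    (hbound : ∀ (x : X₁) (y : Y₁) (z : Z),
      |B x y z| ≤ C * ‖e₁ x‖ ^ r * ‖x‖ ^ (1 - r) * ‖e₂ y‖ ^ r * ‖y‖ ^ (1 - r) * ‖z‖)
    (T : ℝ) (hT : 0 < T)
    (x : ℕ → ℝ → X₁) (y : ℕ → ℝ → Y₁) (xl : ℝ → X₁) (yl : ℝ → Y₁)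
    (hx2 : ∀ ℓ, MemLp (x ℓ) 2 (volume.restrict (Set.Ioc 0 T)))
    (hy2 : ∀ ℓ, MemLp (y ℓ) 2 (volume.restrict (Set.Ioc 0 T)))
    (hxl2 : MemLp xl 2 (volume.restrict (Set.Ioc 0 T)))
    (hyl2 : MemLp yl 2 (volume.restrict (Set.Ioc 0 T)))
    (hbdd : ∃ K : ℝ, ∀ ℓ, (∫ t in Set.Ioc 0 T, ‖x ℓ t‖^2 + ‖y ℓ t‖^2) ≤ K)
    (hstrong : Tendsto
      (fun ℓ => ∫ t in Set.Ioc 0 T,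
        (‖e₁ (x ℓ t) - e₁ (xl t)‖^2 + ‖e₂ (y ℓ t) - e₂ (yl t)‖^2))
      atTop (nhds 0))
    (hweakx : ∀ φ : ℝ → (X₁ →L[ℝ] ℝ), MemLp φ 2 (volume.restrict (Set.Ioc 0 T)) →
      Tendsto (fun ℓ => ∫ t in Set.Ioc 0 T, φ t (x ℓ t)) atTop
        (nhds (∫ t in Set.Ioc 0 T, φ t (xl t))))
    (hweaky : ∀ ψ : ℝ → (Y₁ →L[ℝ] ℝ), MemLp ψ 2 (volume.restrict (Set.Ioc 0 T)) →
      Tendsto (fun ℓ => ∫ t in Set.Ioc 0 T, ψ t (y ℓ t)) atTop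
        (nhds (∫ t in Set.Ioc 0 T, ψ t (yl t)))) :
    ∀ z : Z, Tendsto (fun ℓ => ∫ t in Set.Ioc 0 T, B (x ℓ t) (y ℓ t) z) atTop
      (nhds (∫ t in Set.Ioc 0 T, B (xl t) (yl t) z)) := by
  intro z
  set μ : Measure ℝ := volume.restrict (Set.Ioc 0 T) with hμ
  obtain ⟨K, hK⟩ := hbdd
  have r0 : (0:ℝ) ≤ r / 2 := by linarith
  have s0 : (0:ℝ) ≤ (1 - r) / 2 := by linarith
  -- memLp of differences and compositions
  have hxe : ∀ ℓ, MemLp (fun t => x ℓ t - xl t) 2 μ := fun ℓ => (hx2 ℓ).sub hxl2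
  have hye : ∀ ℓ, MemLp (fun t => y ℓ t - yl t) 2 μ := fun ℓ => (hy2 ℓ).sub hyl2
  have hae : ∀ ℓ, MemLp (fun t => e₁ (x ℓ t) - e₁ (xl t)) 2 μ := fun ℓ => by
    simpa [Function.comp_def, map_sub] using e₁.comp_memLp' (hxe ℓ)
  have hbe : ∀ ℓ, MemLp (fun t => e₂ (y ℓ t) - e₂ (yl t)) 2 μ := fun ℓ => by
    simpa [Function.comp_def, map_sub] using e₂.comp_memLp' (hye ℓ)
  have hey : ∀ ℓ, MemLp (fun t => e₂ (y ℓ t)) 2 μ := fun ℓ => by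
    simpa [Function.comp_def] using e₂.comp_memLp' (hy2 ℓ)
  -- integrability of squares
  have ix : ∀ ℓ, Integrable (fun t => ‖x ℓ t‖^2) μ := fun ℓ => integrable_sq_norm (hx2 ℓ)
  have iy : ∀ ℓ, Integrable (fun t => ‖y ℓ t‖^2) μ := fun ℓ => integrable_sq_norm (hy2 ℓ)
  have ixl : Integrable (fun t => ‖xl t‖^2) μ := integrable_sq_norm hxl2
  have iyl : Integrable (fun t => ‖yl t‖^2) μ := integrable_sq_norm hyl2
  have ia : ∀ ℓ, Integrable (fun t => ‖e₁ (x ℓ t) - e₁ (xl t)‖^2) μ :=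
    fun ℓ => integrable_sq_norm (hae ℓ)
  have ib : ∀ ℓ, Integrable (fun t => ‖e₂ (y ℓ t) - e₂ (yl t)‖^2) μ :=
    fun ℓ => integrable_sq_norm (hbe ℓ)
  -- nonnegativity of K
  have hK0 : 0 ≤ K :=
    le_trans (integral_nonneg fun t => by positivity) (hK 0)
  -- uniform L² bounds
  have hxK : ∀ ℓ, ∫ t, ‖x ℓ t‖^2 ∂μ ≤ K := by
    intro ℓ
    refine le_trans (integral_mono (ix ℓ) ((ix ℓ).add (iy ℓ)) fun t => ?_) (hK ℓ)
    exact le_add_of_nonneg_right (by positivity)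
  have hyK : ∀ ℓ, ∫ t, ‖y ℓ t‖^2 ∂μ ≤ K := by
    intro ℓ
    refine le_trans (integral_mono (iy ℓ) ((ix ℓ).add (iy ℓ)) fun t => ?_) (hK ℓ)
    exact le_add_of_nonneg_left (by positivity)
  have hΔxK : ∀ ℓ, ∫ t, ‖x ℓ t - xl t‖^2 ∂μ ≤ 2*K + 2*(∫ t, ‖xl t‖^2 ∂μ) := by
    intro ℓ
    have h1 : ∫ t, ‖x ℓ t - xl t‖^2 ∂μ ≤ ∫ t, (2*‖x ℓ t‖^2 + 2*‖xl t‖^2) ∂μ := by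
      refine integral_mono (integrable_sq_norm (hxe ℓ))
        (((ix ℓ).const_mul 2).add (ixl.const_mul 2)) fun t => ?_
      have h := norm_sub_le (x ℓ t) (xl t)
      nlinarith [norm_nonneg (x ℓ t), norm_nonneg (xl t), norm_nonneg (x ℓ t - xl t), sq_nonneg (‖x ℓ t‖ - ‖xl t‖), sq_nonneg (‖x ℓ t‖ + ‖xl t‖)]
    rw [integral_add ((ix ℓ).const_mul 2) (ixl.const_mul 2), integral_const_mul, integral_const_mul] at h1
    have := hxK ℓ
    linarith
  have hΔyK : ∀ ℓ, ∫ t, ‖y ℓ t - yl t‖^2 ∂μ ≤ 2*K + 2*(∫ t, ‖yl t‖^2 ∂μ) := by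
    intro ℓ
    have h1 : ∫ t, ‖y ℓ t - yl t‖^2 ∂μ ≤ ∫ t, (2*‖y ℓ t‖^2 + 2*‖yl t‖^2) ∂μ := by
      refine integral_mono (integrable_sq_norm (hye ℓ))
        (((iy ℓ).const_mul 2).add (iyl.const_mul 2)) fun t => ?_
      have h := norm_sub_le (y ℓ t) (yl t)
      nlinarith [norm_nonneg (y ℓ t), norm_nonneg (yl t), norm_nonneg (y ℓ t - yl t), sq_nonneg (‖y ℓ t‖ - ‖yl t‖), sq_nonneg (‖y ℓ t‖ + ‖yl t‖)]
    rw [integral_add ((iy ℓ).const_mul 2) (iyl.const_mul 2), integral_const_mul, integral_const_mul] at h1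
    have := hyK ℓ
    linarith
  have heyK : ∀ ℓ, ∫ t, ‖e₂ (y ℓ t)‖^2 ∂μ ≤ ‖e₂‖^2 * K := by
    intro ℓ
    have h1 : ∫ t, ‖e₂ (y ℓ t)‖^2 ∂μ ≤ ∫ t, ‖e₂‖^2 * ‖y ℓ t‖^2 ∂μ := by
      refine integral_mono (integrable_sq_norm (hey ℓ)) ((iy ℓ).const_mul _) fun t => ?_
      have h := e₂.le_opNorm (y ℓ t)
      nlinarith [norm_nonneg (y ℓ t), norm_nonneg (e₂ (y ℓ t)), e₂.opNorm_nonneg]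
    rw [integral_const_mul] at h1
    exact h1.trans (mul_le_mul_of_nonneg_left (hyK ℓ) (by positivity))
  -- the strongly convergent pieces
  set a : ℕ → ℝ := fun ℓ => ∫ t, ‖e₁ (x ℓ t) - e₁ (xl t)‖^2 ∂μ with hadef
  set b : ℕ → ℝ := fun ℓ => ∫ t, ‖e₂ (y ℓ t) - e₂ (yl t)‖^2 ∂μ with hbdef
  have ha0 : ∀ ℓ, 0 ≤ a ℓ := fun ℓ => integral_nonneg fun t => by positivity
  have hb0 : ∀ ℓ, 0 ≤ b ℓ := fun ℓ => integral_nonneg fun t => by positivity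
  have hsum : ∀ ℓ, ∫ t, (‖e₁ (x ℓ t) - e₁ (xl t)‖^2 + ‖e₂ (y ℓ t) - e₂ (yl t)‖^2) ∂μ
      = a ℓ + b ℓ := fun ℓ => integral_add (ia ℓ) (ib ℓ)
  have ha : Tendsto a atTop (nhds 0) := by
    refine squeeze_zero ha0 (fun ℓ => ?_) (by simpa [hsum] using hstrong)
    exact le_add_of_nonneg_right (hb0 ℓ)
  have hbb : Tendsto b atTop (nhds 0) := by
    refine squeeze_zero hb0 (fun ℓ => ?_) (by simpa [hsum] using hstrong)
    exact le_add_of_nonneg_left (ha0 ℓ)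
  have haR : Tendsto (fun ℓ => (a ℓ) ^ (r/2)) atTop (nhds 0) := by
    have h := ((Real.continuousAt_rpow_const 0 (r/2) (Or.inr (by linarith))).tendsto).comp ha
    simpa [Function.comp_def, Real.zero_rpow (by positivity : (r:ℝ)/2 ≠ 0)] using h
  have hbR : Tendsto (fun ℓ => (b ℓ) ^ (r/2)) atTop (nhds 0) := by
    have h := ((Real.continuousAt_rpow_const 0 (r/2) (Or.inr (by linarith))).tendsto).comp hbb
    simpa [Function.comp_def, Real.zero_rpow (by positivity : (r:ℝ)/2 ≠ 0)] using h
  -- constants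
  set D1 : ℝ := C * ‖z‖ * (2*K + 2*(∫ t, ‖xl t‖^2 ∂μ)) ^ ((1-r)/2) * (‖e₂‖^2*K) ^ (r/2)
      * K ^ ((1-r)/2) with hD1
  set D2 : ℝ := C * ‖z‖ * (∫ t, ‖e₁ (xl t)‖^2 ∂μ) ^ (r/2) * (∫ t, ‖xl t‖^2 ∂μ) ^ ((1-r)/2)
      * (2*K + 2*(∫ t, ‖yl t‖^2 ∂μ)) ^ ((1-r)/2) with hD2
  set L : ℝ := ∫ t, B (xl t) (yl t) z ∂μ with hL
  -- per-ℓ estimate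
  have key : ∀ ℓ, |(∫ t, B (x ℓ t) (y ℓ t) z ∂μ) - L| ≤
      D1 * (a ℓ) ^ (r/2) + D2 * (b ℓ) ^ (r/2) := by
    intro ℓ
    have i1 : Integrable (fun t => B (x ℓ t - xl t) (y ℓ t) z) μ :=
      integrable_term e₁ e₂ B hC hr0 hbound (hxe ℓ) (hy2 ℓ) z
    have i2 : Integrable (fun t => B (xl t) (y ℓ t - yl t) z) μ :=
      integrable_term e₁ e₂ B hC hr0 hbound hxl2 (hye ℓ) z
    have i3 : Integrable (fun t => B (xl t) (yl t) z) μ :=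
      integrable_term e₁ e₂ B hC hr0 hbound hxl2 hyl2 z
    have split : (∫ t, B (x ℓ t) (y ℓ t) z ∂μ) - L =
        (∫ t, B (x ℓ t - xl t) (y ℓ t) z ∂μ) + (∫ t, B (xl t) (y ℓ t - yl t) z ∂μ) := by
      have hpt : (fun t => B (x ℓ t) (y ℓ t) z) = fun t =>
          B (x ℓ t - xl t) (y ℓ t) z + (B (xl t) (y ℓ t - yl t) z + B (xl t) (yl t) z) := by
        funext t
        simp only [map_sub, LinearMap.sub_apply, ContinuousLinearMap.sub_apply]
        ring
      have i23 : Integrable (fun t => B (xl t) (y ℓ t - yl t) z + B (xl t) (yl t) z) μ :=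
        i2.add i3
      rw [hL, hpt, integral_add i1 i23, integral_add i2 i3]
      ring
    rw [split]
    have t1 : |∫ t, B (x ℓ t - xl t) (y ℓ t) z ∂μ| ≤ D1 * (a ℓ) ^ (r/2) := by
      have h := term_bound e₁ e₂ B hC hr0 hr1 hbound _ _ (hxe ℓ) (hy2 ℓ) z
      have heq : (∫ t, ‖e₁ (x ℓ t - xl t)‖^2 ∂μ) = a ℓ := by
        simp only [hadef, map_sub]
      rw [heq] at h
      refine h.trans ?_
      rw [hD1]
      calc C * ‖z‖ * (a ℓ) ^ (r/2) * (∫ t, ‖x ℓ t - xl t‖^2 ∂μ) ^ ((1-r)/2)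
            * (∫ t, ‖e₂ (y ℓ t)‖^2 ∂μ) ^ (r/2) * (∫ t, ‖y ℓ t‖^2 ∂μ) ^ ((1-r)/2)
          ≤ C * ‖z‖ * (a ℓ) ^ (r/2) * (2*K + 2*(∫ t, ‖xl t‖^2 ∂μ)) ^ ((1-r)/2)
            * (‖e₂‖^2*K) ^ (r/2) * K ^ ((1-r)/2) := by
            gcongr <;>
              first
              | exact hΔxK ℓ
              | exact heyK ℓ
              | exact hyK ℓ
              | exact hΔyK ℓ
              | exact integral_nonneg fun t => by positivity
              | positivity
              | ((repeat' apply mul_nonneg) <;>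
                  first
                  | positivity
                  | exact Real.rpow_nonneg (ha0 ℓ) _
                  | exact Real.rpow_nonneg (hb0 ℓ) _
                  | exact Real.rpow_nonneg (integral_nonneg fun t => by positivity) _)
        _ = C * ‖z‖ * (2*K + 2*(∫ t, ‖xl t‖^2 ∂μ)) ^ ((1-r)/2) * (‖e₂‖^2*K) ^ (r/2)
            * K ^ ((1-r)/2) * (a ℓ) ^ (r/2) := by ring
    have t2 : |∫ t, B (xl t) (y ℓ t - yl t) z ∂μ| ≤ D2 * (b ℓ) ^ (r/2) := by
      have h := term_bound e₁ e₂ B hC hr0 hr1 hbound _ _ hxl2 (hye ℓ) z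
      have heq : (∫ t, ‖e₂ (y ℓ t - yl t)‖^2 ∂μ) = b ℓ := by
        simp only [hbdef, map_sub]
      rw [heq] at h
      refine h.trans ?_
      rw [hD2]
      calc C * ‖z‖ * (∫ t, ‖e₁ (xl t)‖^2 ∂μ) ^ (r/2) * (∫ t, ‖xl t‖^2 ∂μ) ^ ((1-r)/2)
            * (b ℓ) ^ (r/2) * (∫ t, ‖y ℓ t - yl t‖^2 ∂μ) ^ ((1-r)/2)
          ≤ C * ‖z‖ * (∫ t, ‖e₁ (xl t)‖^2 ∂μ) ^ (r/2) * (∫ t, ‖xl t‖^2 ∂μ) ^ ((1-r)/2)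
            * (b ℓ) ^ (r/2) * (2*K + 2*(∫ t, ‖yl t‖^2 ∂μ)) ^ ((1-r)/2) := by
            gcongr <;>
              first
              | exact hΔxK ℓ
              | exact heyK ℓ
              | exact hyK ℓ
              | exact hΔyK ℓ
              | exact integral_nonneg fun t => by positivity
              | positivity
              | ((repeat' apply mul_nonneg) <;>
                  first
                  | positivity
                  | exact Real.rpow_nonneg (ha0 ℓ) _
                  | exact Real.rpow_nonneg (hb0 ℓ) _
                  | exact Real.rpow_nonneg (integral_nonneg fun t => by positivity) _)
        _ = C * ‖z‖ * (∫ t, ‖e₁ (xl t)‖^2 ∂μ) ^ (r/2) * (∫ t, ‖xl t‖^2 ∂μ) ^ ((1-r)/2)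
            * (2*K + 2*(∫ t, ‖yl t‖^2 ∂μ)) ^ ((1-r)/2) * (b ℓ) ^ (r/2) := by ring
    calc |(∫ t, B (x ℓ t - xl t) (y ℓ t) z ∂μ) + (∫ t, B (xl t) (y ℓ t - yl t) z ∂μ)|
        ≤ |∫ t, B (x ℓ t - xl t) (y ℓ t) z ∂μ| + |∫ t, B (xl t) (y ℓ t - yl t) z ∂μ| :=
          abs_add_le _ _
      _ ≤ D1 * (a ℓ) ^ (r/2) + D2 * (b ℓ) ^ (r/2) := add_le_add t1 t2
  -- conclude
  have hlim : Tendsto (fun ℓ => D1 * (a ℓ) ^ (r/2) + D2 * (b ℓ) ^ (r/2)) atTop (nhds 0) := by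
    have h1 := haR.const_mul D1
    have h2 := hbR.const_mul D2
    simpa using h1.add h2
  have hzero : Tendsto (fun ℓ => (∫ t, B (x ℓ t) (y ℓ t) z ∂μ) - L) atTop (nhds 0) :=
    squeeze_zero_norm (fun ℓ => by simpa [Real.norm_eq_abs] using key ℓ) hlim
  have := hzero.add_const L
  simpa using this
end
end
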